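/- Let α : ℕ → ℝ satisfy α_n > 0 for all n, suppose the sequence (α_n) converges, and let 0 ≤ q ≤ 1/2. Define β_n = α_n^{1−q} · α_{n+1}^{q}. If (ln β_n)_n is completely alternating, then (ln α_n)_n is completely alternating. (Equivalently: if the generalized Aluthge transform AT_q(W_α) of a weighted shift whose weights approach a limit is moment infinitely divisible, then so is W_α.) -/

import Mathlib

/-- The `n`-th iterated forward difference of a sequence, evaluated at `k`. -/
noncomputable def fdiff (a : ℕ → ℝ) (n k : ℕ) : ℝ :=
  ∑ i ∈ Finset.range (n + 1), (-1 : ℝ) ^ i * (n.choose i : ℝ) * a (k + i)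

/-- A sequence is completely alternating if all iterated forward differences of
order `n ≥ 1` are nonpositive. -/
def CompletelyAlternating (a : ℕ → ℝ) : Prop :=
  ∀ n : ℕ, 1 ≤ n → ∀ k : ℕ, fdiff a n k ≤ 0

/-!
Write `a = log α`, so that `b = convexShift q a`, `b n = (1 - q) a n + q a (n + 1)`, is the
logarithm of the weights of `AT_q`. Then `∇ᴺ b = ∇ᴺ a - q ∇ᴺ⁺¹ a`, and iterating gives
`∇ⁿ a = ∑_{j < m} qʲ ∇ⁿ⁺ʲ b + qᵐ ∇ⁿ⁺ᵐ a ≤ qᵐ ∇ⁿ⁺ᵐ a` whenever `b` is completely alternating.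
Since `b` is nondecreasing and `α` is bounded, `log α` is bounded below, so `α` has a positive
limit and `a` converges. For a convergent sequence `2⁻ᴺ ∇ᴺ a` is dominated by the binomial
(Euler) means of `|a - lim a|`, which tend to zero; as `q ≤ 1/2`, `qᵐ ∇ⁿ⁺ᵐ a → 0`.
-/

open Finset Filter Topology

lemma fdiff_eq_neg_one_pow_mul_fwdDiff_iter (a : ℕ → ℝ) (n k : ℕ) :
    fdiff a n k = (-1) ^ n * (fwdDiff 1)^[n] a k := by
  rw [fdiff, fwdDiff_iter_eq_sum_shift, mul_sum]
  refine sum_congr rfl fun i hi => ?_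
  have hin : i ≤ n := Nat.lt_succ_iff.mp (mem_range.mp hi)
  rw [zsmul_eq_mul, smul_eq_mul, mul_one]
  push_cast
  rw [← mul_assoc, ← mul_assoc, ← pow_add, show n + (n - i) = i + 2 * (n - i) by omega, pow_add,
    pow_mul]
  norm_num

lemma fdiff_succ (a : ℕ → ℝ) (n k : ℕ) :
    fdiff a (n + 1) k = fdiff a n k - fdiff a n (k + 1) := by
  simp only [fdiff_eq_neg_one_pow_mul_fwdDiff_iter, Function.iterate_succ_apply', fwdDiff,
    pow_succ]
  ring

lemma fdiff_one (a : ℕ → ℝ) (k : ℕ) : fdiff a 1 k = a k - a (k + 1) := by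
  simp [fdiff, sum_range_succ, sub_eq_add_neg]

lemma fdiff_sub_const (a : ℕ → ℝ) (c : ℝ) {n : ℕ} (hn : n ≠ 0) (k : ℕ) :
    fdiff (fun m => a m - c) n k = fdiff a n k := by
  obtain ⟨n, rfl⟩ := Nat.exists_eq_succ_of_ne_zero hn
  clear hn
  induction n generalizing k with
  | zero => simp [fdiff_one]
  | succ n ih => rw [fdiff_succ _ (n + 1), ih, ih, ← fdiff_succ]

lemma abs_fdiff_le (a : ℕ → ℝ) (n k : ℕ) :
    |fdiff a n k| ≤ ∑ i ∈ range (n + 1), (n.choose i : ℝ) * |a (k + i)| := by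
  refine (abs_sum_le_sum_abs _ _).trans (sum_le_sum fun i _ => ?_)
  simp [abs_mul]

lemma CompletelyAlternating.monotone {a : ℕ → ℝ} (ha : CompletelyAlternating a) : Monotone a :=
  monotone_nat_of_le_succ fun k => sub_nonpos.mp (fdiff_one a k ▸ ha 1 le_rfl k)

def convexShift (q : ℝ) (a : ℕ → ℝ) (n : ℕ) : ℝ := (1 - q) * a n + q * a (n + 1)

section
variable {q : ℝ} {a : ℕ → ℝ}

lemma fdiff_convexShift (n k : ℕ) :
    fdiff (convexShift q a) n k = fdiff a n k - q * fdiff a (n + 1) k := by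
  rw [fdiff_succ, mul_sub]
  simp only [fdiff, convexShift, mul_sum, ← sum_sub_distrib]
  refine sum_congr rfl fun i _ => ?_
  rw [add_right_comm k 1 i]
  ring

lemma fdiff_eq_sum_fdiff_convexShift_add (n k m : ℕ) :
    fdiff a n k = ∑ j ∈ range m, q ^ j * fdiff (convexShift q a) (n + j) k
      + q ^ m * fdiff a (n + m) k := by
  induction m with
  | zero => simp
  | succ m ih =>
    rw [ih, sum_range_succ, fdiff_convexShift, ← add_assoc n m 1]
    ring

lemma fdiff_le_pow_mul_fdiff (hq : 0 ≤ q) (hb : CompletelyAlternating (convexShift q a))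
    {n : ℕ} (hn : 1 ≤ n) (k m : ℕ) : fdiff a n k ≤ q ^ m * fdiff a (n + m) k := by
  rw [fdiff_eq_sum_fdiff_convexShift_add (q := q) n k m, add_le_iff_nonpos_left]
  exact sum_nonpos fun j _ =>
    mul_nonpos_of_nonneg_of_nonpos (pow_nonneg hq j) (hb (n + j) (by omega) k)

end

/-- The Silverman–Toeplitz theorem, for limit zero. -/
lemma tendsto_sum_range_mul_of_tendsto_zero {w : ℕ → ℕ → ℝ} (hw : ∀ N i, 0 ≤ w N i)
    (hw_sum : ∀ N, ∑ i ∈ range (N + 1), w N i ≤ 1)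
    (hw_col : ∀ i, Tendsto (fun N => w N i) atTop (𝓝 0))
    {d : ℕ → ℝ} (hd : Tendsto d atTop (𝓝 0)) :
    Tendsto (fun N => ∑ i ∈ range (N + 1), w N i * d i) atTop (𝓝 0) := by
  refine Metric.tendsto_nhds.mpr fun ε hε => ?_
  have hε2 := half_pos hε
  obtain ⟨T, hT⟩ := eventually_atTop.mp (Metric.tendsto_nhds.mp hd (ε / 2) hε2)
  have head : Tendsto (fun N => ∑ i ∈ range T, w N i * |d i|) atTop (𝓝 0) := by
    simpa using tendsto_finsetSum (range T) fun i _ => (hw_col i).mul_const |d i|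
  filter_upwards [Metric.tendsto_nhds.mp head (ε / 2) hε2] with N hN
  have hwd : ∀ i, 0 ≤ w N i * |d i| := fun i => mul_nonneg (hw N i) (abs_nonneg _)
  rw [Real.dist_eq, sub_zero, abs_of_nonneg (sum_nonneg fun i _ => hwd i)] at hN
  have tail : ∑ i ∈ range (N + 1) with ¬i < T, w N i * |d i| ≤ ε / 2 :=
    calc _ ≤ ∑ i ∈ range (N + 1) with ¬i < T, w N i * (ε / 2) := by
          refine sum_le_sum fun i hi => mul_le_mul_of_nonneg_left ?_ (hw N i)
          simpa [Real.dist_eq] using (hT i (not_lt.mp (mem_filter.mp hi).2)).le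
      _ ≤ ∑ i ∈ range (N + 1), w N i * (ε / 2) :=
          sum_le_sum_of_subset_of_nonneg (filter_subset _ _) fun i _ _ =>
            mul_nonneg (hw N i) hε2.le
      _ ≤ ε / 2 := by
          rw [← sum_mul]
          exact mul_le_of_le_one_left hε2.le (hw_sum N)
  rw [Real.dist_eq, sub_zero]
  calc |∑ i ∈ range (N + 1), w N i * d i|
      ≤ ∑ i ∈ range (N + 1), w N i * |d i| := by
        refine (abs_sum_le_sum_abs _ _).trans_eq (sum_congr rfl fun i _ => ?_)
        rw [abs_mul, abs_of_nonneg (hw N i)]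
    _ = ∑ i ∈ range (N + 1) with i < T, w N i * |d i|
        + ∑ i ∈ range (N + 1) with ¬i < T, w N i * |d i| :=
        (sum_filter_add_sum_filter_not _ _ _).symm
    _ ≤ ∑ i ∈ range T, w N i * |d i| + ε / 2 := by
        refine add_le_add (sum_le_sum_of_subset_of_nonneg (fun i hi => ?_) fun i _ _ => hwd i) tail
        exact mem_range.mpr (mem_filter.mp hi).2
    _ < ε := by linarith

lemma tendsto_sum_range_half_pow_mul_choose_mul {d : ℕ → ℝ} (hd : Tendsto d atTop (𝓝 0)) :
    Tendsto (fun N => ∑ i ∈ range (N + 1), (1 / 2 : ℝ) ^ N * N.choose i * d i) atTop (𝓝 0) := by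
  refine tendsto_sum_range_mul_of_tendsto_zero (fun N i => by positivity) (fun N => ?_)
    (fun i => ?_) hd
  · rw [← mul_sum, ← Nat.cast_sum, Nat.sum_range_choose, Nat.cast_pow, ← mul_pow]
    norm_num
  · refine squeeze_zero (fun N => by positivity) (fun N => ?_)
      (tendsto_pow_const_mul_const_pow_of_lt_one i (by norm_num : (0 : ℝ) ≤ 1 / 2)
        (by norm_num))
    rw [mul_comm]
    gcongr
    exact_mod_cast Nat.choose_le_pow N i

lemma tendsto_half_pow_mul_fdiff {a : ℕ → ℝ} {c : ℝ} (ha : Tendsto a atTop (𝓝 c)) (k : ℕ) :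
    Tendsto (fun N => (1 / 2 : ℝ) ^ N * fdiff a N k) atTop (𝓝 0) := by
  have hd : Tendsto (fun i => |a (k + i) - c|) atTop (𝓝 0) := by
    have hshift : Tendsto (fun i => k + i) atTop atTop :=
      (tendsto_add_atTop_nat k).congr fun i => add_comm i k
    simpa using ((ha.comp hshift).sub_const c).abs
  refine squeeze_zero_norm' ?_ (tendsto_sum_range_half_pow_mul_choose_mul hd)
  filter_upwards [eventually_ne_atTop 0] with N hN
  rw [norm_mul, Real.norm_of_nonneg (by positivity), Real.norm_eq_abs, ← fdiff_sub_const a c hN]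
  simp_rw [mul_assoc, ← mul_sum]
  exact mul_le_mul_of_nonneg_left (abs_fdiff_le _ N k) (by positivity)

lemma tendsto_pow_mul_fdiff_add {q : ℝ} (hq0 : 0 ≤ q) (hq2 : q ≤ 1 / 2) {a : ℕ → ℝ} {c : ℝ}
    (ha : Tendsto a atTop (𝓝 c)) (n k : ℕ) :
    Tendsto (fun m => q ^ m * fdiff a (n + m) k) atTop (𝓝 0) := by
  have h := ((tendsto_half_pow_mul_fdiff ha k).comp (tendsto_add_atTop_nat n)).norm.const_mul
    (2 ^ n)
  rw [norm_zero, mul_zero] at h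
  refine squeeze_zero_norm (fun m => ?_) h
  have hpow : (2 : ℝ) ^ n * (1 / 2) ^ (m + n) = (1 / 2) ^ m := by
    rw [pow_add, mul_left_comm, ← mul_pow]
    norm_num
  calc ‖q ^ m * fdiff a (n + m) k‖ = q ^ m * |fdiff a (n + m) k| := by
        rw [norm_mul, norm_pow, Real.norm_eq_abs, Real.norm_eq_abs, abs_of_nonneg hq0]
    _ ≤ (1 / 2) ^ m * |fdiff a (n + m) k| := by gcongr
    _ = 2 ^ n * ‖(1 / 2 : ℝ) ^ (m + n) * fdiff a (m + n) k‖ := by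
        rw [norm_mul, Real.norm_of_nonneg (by positivity), Real.norm_eq_abs, ← mul_assoc, hpow,
          add_comm m n]

theorem CompletelyAlternating.of_convexShift {q : ℝ} {a : ℕ → ℝ} (hq0 : 0 ≤ q) (hq2 : q ≤ 1 / 2)
    {c : ℝ} (ha : Tendsto a atTop (𝓝 c)) (hb : CompletelyAlternating (convexShift q a)) :
    CompletelyAlternating a := fun n hn k =>
  ge_of_tendsto' (tendsto_pow_mul_fdiff_add hq0 hq2 ha n k) (fdiff_le_pow_mul_fdiff hq0 hb hn k)

lemma exists_forall_le_of_monotone_convexShift {q : ℝ} (hq0 : 0 ≤ q) (hq1 : q < 1)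
    {a : ℕ → ℝ} {M : ℝ} (haM : ∀ n, a n ≤ M) (hb : Monotone (convexShift q a)) :
    ∃ m, ∀ n, m ≤ a n := by
  refine ⟨(convexShift q a 0 - q * M) / (1 - q), fun n => ?_⟩
  rw [div_le_iff₀ (sub_pos.mpr hq1)]
  have hmono : convexShift q a 0 ≤ (1 - q) * a n + q * a (n + 1) := hb (Nat.zero_le n)
  have hqM : q * a (n + 1) ≤ q * M := mul_le_mul_of_nonneg_left (haM (n + 1)) hq0
  linarith

theorem stmt9 (α : ℕ → ℝ) (hα : ∀ n, 0 < α n)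
    (hlim : ∃ L : ℝ, Filter.Tendsto α Filter.atTop (nhds L))
    (q : ℝ) (hq0 : 0 ≤ q) (hq2 : q ≤ 1 / 2)
    (hβ : CompletelyAlternating
      (fun n => Real.log (α n ^ (1 - q) * α (n + 1) ^ q))) :
    CompletelyAlternating (fun n => Real.log (α n)) := by
  obtain ⟨L, hL⟩ := hlim
  have hlog : (fun n => Real.log (α n ^ (1 - q) * α (n + 1) ^ q))
      = convexShift q (fun n => Real.log (α n)) := by
    funext n
    rw [convexShift, Real.log_mul (Real.rpow_pos_of_pos (hα n) _).ne'
      (Real.rpow_pos_of_pos (hα (n + 1)) _).ne', Real.log_rpow (hα n), Real.log_rpow (hα (n + 1))]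
  rw [hlog] at hβ
  obtain ⟨M, hM⟩ := hL.bddAbove_range
  obtain ⟨m, hm⟩ := exists_forall_le_of_monotone_convexShift hq0 (by linarith)
    (fun n => Real.log_le_log (hα n) (hM ⟨n, rfl⟩)) hβ.monotone
  have hL_pos : 0 < L := (Real.exp_pos m).trans_le
    (ge_of_tendsto' hL fun n => (Real.le_log_iff_exp_le (hα n)).mp (hm n))
  exact hβ.of_convexShift hq0 hq2 ((Real.continuousAt_log hL_pos.ne').tendsto.comp hL)
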